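/- Let H be a non-abelian subgroup of a finite group G. Suppose p is the smallest prime dividing |Aut(G)| and q is the smallest prime dividing |H|, and Pr(H, Aut(G)) = (q² + p − 1)/(pq²). Then the quotient group H / L(H, Aut(G)) is isomorphic to ℤ_q × ℤ_q. -/

import Mathlib

/-!
An element of `L = L(H, Aut G)` is fixed by every automorphism, while any other element of `H`
has a proper stabilizer in `Aut G`, of index at least `p`. Counting fixed pairs element by element
gives `Pr(H, Aut G) ≤ (1 + (p - 1) / [H : L]) / p`, so the hypothesis forces `[H : L] ≤ q²`.
On the other hand `L` is central in `H`, so `H / L` is not cyclic since `H` is non-abelian: its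
order is neither `1` nor a prime, and as all its prime factors are at least `q`, `[H : L] ≥ q²`.
A non-cyclic group of order `q²` is elementary abelian, i.e. `ℤ_q × ℤ_q`.
-/

open scoped Classical

variable {G : Type*}

/-- The relative autocommutativity degree `Pr(H, Aut(G))`: the probability that a randomly
chosen automorphism of `G` fixes a randomly chosen element of the subgroup `H`. -/
noncomputable def autPr [Group G] (H : Subgroup G) : ℚ :=
  (Nat.card {p : H × MulAut G // p.2 (p.1 : G) = (p.1 : G)} : ℚ) /
    ((Nat.card H : ℚ) * (Nat.card (MulAut G) : ℚ))

/-- `L(H, Aut(G))`, the subgroup of elements of `H` fixed by every automorphism of `G`. -/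
def autFix [Group G] (H : Subgroup G) : Subgroup G where
  carrier := {x | x ∈ H ∧ ∀ α : MulAut G, α x = x}
  one_mem' := ⟨H.one_mem, fun α => map_one α⟩
  mul_mem' := fun ha hb => ⟨H.mul_mem ha.1 hb.1, fun α => by
    rw [map_mul, ha.2 α, hb.2 α]⟩
  inv_mem' := fun ha => ⟨H.inv_mem ha.1, fun α => by rw [map_inv, ha.2 α]⟩

instance autFix_normal [Group G] (H : Subgroup G) : ((autFix H).subgroupOf H).Normal := by
  constructor
  intro n hn g
  rw [Subgroup.mem_subgroupOf] at hn ⊢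
  obtain ⟨-, hfix⟩ := hn
  have hcen : ∀ c : G, c * (n : G) = (n : G) * c := by
    intro c
    have h := hfix (MulAut.conj c)
    simp only [MulAut.conj_apply] at h
    exact mul_inv_eq_iff_eq_mul.mp h
  have hconj : ∀ c : G, c * (n : G) * c⁻¹ = (n : G) := by
    intro c
    rw [hcen c, mul_inv_cancel_right]
  refine ⟨(g * n * g⁻¹).2, fun α => ?_⟩
  push_cast
  rw [map_mul, map_mul, map_inv, hfix α, hconj (α g), hconj (g : G)]

/-- `X_H`: the set of elements of `H` whose centralizer in `Aut(G)` is trivial, i.e. the only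
automorphism fixing them is the identity. -/
def autX [Group G] (H : Subgroup G) : Set H :=
  {x | ∀ α : MulAut G, α (x : G) = x → α = 1}

/-- `S(H, Aut(G))`: the set of autocommutators `[x, α] = x⁻¹ α(x)` with `x ∈ H`, `α ∈ Aut(G)`. -/
def autS [Group G] (H : Subgroup G) : Set G :=
  {g | ∃ x ∈ H, ∃ α : MulAut G, g = x⁻¹ * α x}

/-- Every autocommutator `x⁻¹ α(x)` with `x ∈ H` lies in `[H, Aut(G)] = ⟨S(H, Aut(G))⟩`. -/
lemma autcomm_mem_closure [Group G] (H : Subgroup G) (x : H) (α : MulAut G) :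
    (x : G)⁻¹ * α x ∈ Subgroup.closure (autS H) :=
  Subgroup.subset_closure ⟨x, x.2, α, rfl⟩

lemma Subgroup.mul_natCard_le_natCard_of_ne_top {A : Type*} [Group A] [Finite A]
    {K : Subgroup A} (hK : K ≠ ⊤) {p : ℕ}
    (hpmin : ∀ r : ℕ, r.Prime → r ∣ Nat.card A → p ≤ r) :
    p * Nat.card K ≤ Nat.card A := by
  have hprime : K.index.minFac.Prime := Nat.minFac_prime (mt Subgroup.index_eq_one.mp hK)
  have hp : p ≤ K.index :=
    (hpmin _ hprime ((Nat.minFac_dvd _).trans K.index_dvd_card)).trans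
      (Nat.minFac_le (Nat.pos_of_ne_zero K.index_ne_zero_of_finite))
  calc p * Nat.card K ≤ K.index * Nat.card K := Nat.mul_le_mul_right _ hp
    _ = Nat.card A := by rw [mul_comm, K.card_mul_index]

lemma Nat.sq_le_of_forall_prime_dvd_le {n q : ℕ} (hn : 0 < n) (hn1 : n ≠ 1) (hnp : ¬ n.Prime)
    (hq : ∀ r : ℕ, r.Prime → r ∣ n → q ≤ r) : q ^ 2 ≤ n :=
  (Nat.pow_le_pow_left (hq _ (Nat.minFac_prime hn1) (Nat.minFac_dvd n)) 2).trans
    (Nat.minFac_sq_le_self hn hnp)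

lemma nonempty_mulEquiv_zmod_prod_of_card_eq_sq {Q : Type*} [Group Q] {q : ℕ} [Fact q.Prime]
    (hcard : Nat.card Q = q ^ 2) (hnc : ¬ IsCyclic Q) :
    Nonempty (Q ≃* Multiplicative (ZMod q) × Multiplicative (ZMod q)) := by
  have hq := (Fact.out : q.Prime)
  have : Finite Q := Nat.finite_of_card_ne_zero (by simp [hcard, hq.ne_zero])
  let : CommGroup Q := IsPGroup.commGroupOfCardEqPrimeSq hcard
  have hexp : ∀ g : Q, g ^ q = 1 := by
    intro g
    obtain ⟨i, hi, hoi⟩ := (Nat.dvd_prime_pow hq).mp (hcard ▸ orderOf_dvd_natCard g)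
    have hi2 : i ≠ 2 := by
      rintro rfl
      exact hnc (isCyclic_of_orderOf_eq_card g (by rw [hoi, hcard]))
    exact orderOf_dvd_iff_pow_eq_one.mp
      (hoi ▸ (pow_dvd_pow q (show i ≤ 1 by omega)).trans (pow_one q).dvd)
  let : Module (ZMod q) (Additive Q) := AddCommGroup.zmodModule hexp
  have : Fintype (Additive Q) := Fintype.ofFinite _
  have hfin : Module.Finite (ZMod q) (Additive Q) := Module.Finite.of_finite
  have hrank : Module.finrank (ZMod q) (Additive Q) = 2 := by
    have hpow := Module.card_eq_pow_finrank (K := ZMod q) (V := Additive Q)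
    rw [ZMod.card, ← Nat.card_eq_fintype_card] at hpow
    exact Nat.pow_right_injective hq.two_le (hpow.symm.trans hcard)
  -- `Module.Free` is supplied explicitly: instance search for it gets stuck on `Additive Q`
  let b := @Module.finBasisOfFinrankEq (ZMod q) (Additive Q) _ _ _
    (Module.Free.of_divisionRing _ _) _ hfin 2 hrank
  let e := b.equivFun.trans (LinearEquiv.finTwoArrow (ZMod q) (ZMod q))
  exact ⟨(MulEquiv.multiplicativeAdditive Q).symm.trans
    ((AddEquiv.toMultiplicative e.toAddEquiv).trans (MulEquiv.prodMultiplicative _ _))⟩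

section AutFix

variable [Group G] {H : Subgroup G}

lemma mem_autFix_subgroupOf_iff {x : H} :
    x ∈ (autFix H).subgroupOf H ↔ ∀ α : MulAut G, α x = x :=
  Subgroup.mem_subgroupOf.trans (and_iff_right x.2)

lemma autFix_subgroupOf_le_center : (autFix H).subgroupOf H ≤ Subgroup.center H := by
  intro x hx
  rw [Subgroup.mem_center_iff]
  intro y
  have hy := mem_autFix_subgroupOf_iff.mp hx (MulAut.conj (y : G))
  rw [MulAut.conj_apply, mul_inv_eq_iff_eq_mul] at hy
  exact Subtype.ext hy

lemma not_isCyclic_quotient_autFix (hna : ¬ IsMulCommutative H) :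
    ¬ IsCyclic (H ⧸ (autFix H).subgroupOf H) := by
  intro hcyc
  apply hna
  apply (QuotientGroup.mk' ((autFix H).subgroupOf H)).isMulCommutative_of_isCyclic_of_ker_le_center
  rw [QuotientGroup.ker_mk']
  exact autFix_subgroupOf_le_center

lemma sq_le_index_autFix [Finite G] (hna : ¬ IsMulCommutative H) {q : ℕ}
    (hqmin : ∀ r : ℕ, r.Prime → r ∣ Nat.card H → q ≤ r) :
    q ^ 2 ≤ ((autFix H).subgroupOf H).index := by
  have hnc := not_isCyclic_quotient_autFix hna
  refine Nat.sq_le_of_forall_prime_dvd_le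
    (Nat.pos_of_ne_zero Subgroup.index_ne_zero_of_finite) ?_ ?_
    fun r hr hdvd => hqmin r hr (hdvd.trans (Subgroup.index_dvd_card _))
  · intro h1
    have := (Nat.card_eq_one_iff_unique.mp h1).1
    exact hnc inferInstance
  · intro hprime
    have := Fact.mk hprime
    exact hnc (isCyclic_of_prime_card (p := ((autFix H).subgroupOf H).index) rfl)

end AutFix

section AutPr

variable [Group G] [Finite G] {H : Subgroup G}

lemma natCard_fixedPairs_eq_sum_stabilizer [Fintype H] :
    Nat.card {p : H × MulAut G // p.2 (p.1 : G) = p.1} =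
      ∑ x : H, Nat.card (MulAction.stabilizer (MulAut G) (x : G)) := by
  have := Fintype.ofFinite (MulAut G)
  rw [Nat.card_congr (Equiv.subtypeProdEquivSigmaSubtype fun (x : H) (α : MulAut G) => α x = x),
    Nat.card_sigma]
  rfl

lemma mul_natCard_stabilizer_le {p : ℕ}
    (hpmin : ∀ r : ℕ, r.Prime → r ∣ Nat.card (MulAut G) → p ≤ r) (x : H) :
    (p : ℚ) * Nat.card (MulAction.stabilizer (MulAut G) (x : G)) ≤
      Nat.card (MulAut G) * (1 + (p - 1) * if x ∈ (autFix H).subgroupOf H then 1 else 0) := by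
  by_cases hx : x ∈ (autFix H).subgroupOf H
  · have htop : MulAction.stabilizer (MulAut G) (x : G) = ⊤ :=
      eq_top_iff.mpr fun α _ => mem_autFix_subgroupOf_iff.mp hx α
    rw [if_pos hx, htop, Subgroup.card_top]
    exact le_of_eq (by ring)
  · have hne : MulAction.stabilizer (MulAut G) (x : G) ≠ ⊤ := fun htop =>
      hx (mem_autFix_subgroupOf_iff.mpr fun α => htop.ge (Subgroup.mem_top α))
    rw [if_neg hx, mul_zero, add_zero, mul_one]
    exact_mod_cast Subgroup.mul_natCard_le_natCard_of_ne_top hne hpmin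

lemma autPr_le {p : ℕ} (hp : 0 < p)
    (hpmin : ∀ r : ℕ, r.Prime → r ∣ Nat.card (MulAut G) → p ≤ r) :
    autPr H ≤ (1 + (p - 1) / ((autFix H).subgroupOf H).index) / p := by
  have := Fintype.ofFinite G
  set L := (autFix H).subgroupOf H
  set a : ℚ := (Nat.card (MulAut G) : ℚ)
  have hcount : (p : ℚ) * Nat.card {p : H × MulAut G // p.2 (p.1 : G) = p.1} ≤
      a * (Nat.card H + (p - 1) * Nat.card L) :=
    calc (p : ℚ) * Nat.card {p : H × MulAut G // p.2 (p.1 : G) = p.1}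
        = ∑ x : H, (p : ℚ) * Nat.card (MulAction.stabilizer (MulAut G) (x : G)) := by
          rw [natCard_fixedPairs_eq_sum_stabilizer, Nat.cast_sum, Finset.mul_sum]
      _ ≤ ∑ x : H, a * (1 + (p - 1) * if x ∈ L then 1 else 0) :=
          Finset.sum_le_sum fun x _ => mul_natCard_stabilizer_le hpmin x
      _ = a * (Nat.card H + (p - 1) * Nat.card L) := by
          rw [← Finset.mul_sum, Finset.sum_add_distrib, ← Finset.mul_sum, Finset.sum_boole,
            Finset.sum_const, Finset.card_univ, nsmul_one, ← Nat.card_eq_fintype_card,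
            Nat.card_eq_fintype_card (α := L), Fintype.card_subtype]
  have hindex : (Nat.card H : ℚ) = L.index * Nat.card L := by
    exact_mod_cast (mul_comm _ _).trans L.card_mul_index |>.symm
  have ha : 0 < a := Nat.cast_pos.mpr Nat.card_pos
  have hh : (0 : ℚ) < Nat.card H := by exact_mod_cast Nat.card_pos
  have hk : (0 : ℚ) < L.index := by exact_mod_cast Nat.pos_of_ne_zero L.index_ne_zero_of_finite
  rw [autPr, div_le_div_iff₀ (mul_pos hh ha) (by exact_mod_cast hp), hindex]
  calc _ ≤ a * (L.index * Nat.card L + (p - 1) * Nat.card L) := by rw [← hindex]; linarith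
    _ = (1 + (p - 1) / L.index) * (L.index * Nat.card L * a) := by field_simp

lemma index_autFix_le_sq {p q : ℕ} (hp : p.Prime)
    (hpmin : ∀ r : ℕ, r.Prime → r ∣ Nat.card (MulAut G) → p ≤ r) (hq : 0 < q)
    (h : autPr H = ((q : ℚ) ^ 2 + (p : ℚ) - 1) / ((p : ℚ) * (q : ℚ) ^ 2)) :
    ((autFix H).subgroupOf H).index ≤ q ^ 2 := by
  have hbound := autPr_le (H := H) hp.pos hpmin
  have hp1 : (0 : ℚ) < p - 1 := by
    rw [sub_pos]
    exact_mod_cast hp.one_lt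
  have hk : (0 : ℚ) < ((autFix H).subgroupOf H).index := by
    exact_mod_cast Nat.pos_of_ne_zero Subgroup.index_ne_zero_of_finite
  have hform : ((q : ℚ) ^ 2 + p - 1) / (p * q ^ 2) = (1 + (p - 1) / q ^ 2) / p := by
    field_simp
    ring
  rw [h, hform, div_le_div_iff_of_pos_right (by exact_mod_cast hp.pos), add_le_add_iff_left,
    div_le_div_iff_of_pos_left hp1 (by positivity) hk] at hbound
  exact_mod_cast hbound

end AutPr

theorem stmt11_general [Group G] [Fintype G] (H : Subgroup G)
    (hna : ¬ IsMulCommutative H) (p q : ℕ)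
    (hp : p.Prime)
    (hpmin : ∀ r : ℕ, r.Prime → r ∣ Nat.card (MulAut G) → p ≤ r)
    (hq : q.Prime)
    (hqmin : ∀ r : ℕ, r.Prime → r ∣ Nat.card H → q ≤ r)
    (h : autPr H = ((q : ℚ) ^ 2 + (p : ℚ) - 1) / ((p : ℚ) * (q : ℚ) ^ 2)) :
    Nonempty ((H ⧸ (autFix H).subgroupOf H)
      ≃* Multiplicative (ZMod q) × Multiplicative (ZMod q)) := by
  have := Fact.mk hq
  have hcard : Nat.card (H ⧸ (autFix H).subgroupOf H) = q ^ 2 :=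
    le_antisymm (index_autFix_le_sq hp hpmin hq.pos h) (sq_le_index_autFix hna hqmin)
  exact nonempty_mulEquiv_zmod_prod_of_card_eq_sq hcard (not_isCyclic_quotient_autFix hna)

theorem stmt11 [Group G] [Fintype G] [DecidableEq G] (H : Subgroup G)
    (hna : ¬ IsMulCommutative H) (p q : ℕ)
    (hp : p.Prime) (hpdvd : p ∣ Nat.card (MulAut G))
    (hpmin : ∀ r : ℕ, r.Prime → r ∣ Nat.card (MulAut G) → p ≤ r)
    (hq : q.Prime) (hqdvd : q ∣ Nat.card H)
    (hqmin : ∀ r : ℕ, r.Prime → r ∣ Nat.card H → q ≤ r)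
    (h : autPr H = ((q : ℚ) ^ 2 + (p : ℚ) - 1) / ((p : ℚ) * (q : ℚ) ^ 2)) :
    Nonempty ((H ⧸ (autFix H).subgroupOf H)
      ≃* Multiplicative (ZMod q) × Multiplicative (ZMod q)) :=
  stmt11_general H hna p q hp hpmin hq hqmin h
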